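/- Let $n \geq 2$, $R_2 > R_1 > 0$, and set $\Omega_0 = B_{R_2} \setminus \overline{B_{R_1}}$ (concentric annulus). The function $u(x) = \left(|x| + \frac{R_1^n}{(n-1)|x|^{n-1}}\right)\frac{x_i}{|x|}$ satisfies the Steklov--Neumann eigenvalue equations: $\Delta u = 0$ in $\Omega_0$, $\partial u/\partial\nu = 0$ on $\partial B_{R_1}$, and $\partial u/\partial\nu = \mu_1 u$ on $\partial B_{R_2}$, where $\mu_1 = \frac{(n-1)\left(\left(\frac{R_2}{R_1}\right)^{n} - 1\right)}{R_2\left((n-1)\left(\frac{R_2}{R_1}\right)^{n} + 1\right)}$. -/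

import Mathlib

/-!
Away from the origin `u x = ℓ x * (1 + c * ρ ^ e)` with `ℓ = x ↦ x i`, `c = R1 ^ n / (n - 1)`,
`ρ = ‖x‖ ^ 2` and `e = -n / 2`. For any linear form `ℓ` and exponent `e`, summing the second
derivatives of such a function along an orthonormal basis gives `2 c e (2 e + n) ρ ^ (e - 1) ℓ x`,
which vanishes for `e = -n / 2`. The radial derivative
`D u x x = ℓ x * (1 + c (1 + 2 e) ρ ^ e) = ℓ x * (1 - (n - 1) c / ‖x‖ ^ n)` vanishes on `‖x‖ = R1`
by the choice of `c`; on `‖x‖ = R2`, dividing it by `R2 * u x = R2 * ℓ x * (1 + c / R2 ^ n)`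
gives `μ₁`.
-/

open Real

/-- `u` is harmonic on `s`: twice continuously differentiable with vanishing Laplacian. -/
def IsHarmonicOn {n : ℕ} (u : EuclideanSpace ℝ (Fin n) → ℝ)
    (s : Set (EuclideanSpace ℝ (Fin n))) : Prop :=
  ContDiffOn ℝ 2 u s ∧
    ∀ x ∈ s,
      (∑ i : Fin n,
        fderiv ℝ (fun y => fderiv ℝ u y (EuclideanSpace.single i 1)) x
          (EuclideanSpace.single i 1)) = 0

open RealInnerProductSpace

lemma rpow_sq_neg_half {r : ℝ} (hr : 0 ≤ r) (m : ℕ) : (r ^ 2) ^ (-(m : ℝ) / 2) = (r ^ m)⁻¹ := by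
  rw [← rpow_natCast r 2, ← rpow_mul hr, show ((2 : ℕ) : ℝ) * (-(m : ℝ) / 2) = -m by ring,
    rpow_neg hr, rpow_natCast]

section DipoleMode

variable {E : Type*} [NormedAddCommGroup E] [InnerProductSpace ℝ E]

noncomputable def dipoleMode (ℓ : E →L[ℝ] ℝ) (c e : ℝ) (y : E) : ℝ := ℓ y * (1 + c * (‖y‖ ^ 2) ^ e)

variable (ℓ : E →L[ℝ] ℝ) (c e : ℝ) {x : E}

lemma hasFDerivAt_rpow_norm_sq (hx : x ≠ 0) :
    HasFDerivAt (fun y : E => (‖y‖ ^ 2) ^ e)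
      ((e * (‖x‖ ^ 2) ^ (e - 1)) • (2 • innerSL ℝ x)) x :=
  (hasStrictFDerivAt_norm_sq x).hasFDerivAt.rpow_const (Or.inl (by positivity))

lemma contDiffAt_dipoleMode {k : WithTop ℕ∞} (hx : x ≠ 0) : ContDiffAt ℝ k (dipoleMode ℓ c e) x :=
  ℓ.contDiff.contDiffAt.mul <| contDiffAt_const.add <| contDiffAt_const.mul <|
    (contDiff_norm_sq ℝ).contDiffAt.rpow_const_of_ne (by positivity)

lemma fderiv_dipoleMode_apply (hx : x ≠ 0) (h : E) :
    fderiv ℝ (dipoleMode ℓ c e) x h =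
      ℓ h * (1 + c * (‖x‖ ^ 2) ^ e) + 2 * c * e * (‖x‖ ^ 2) ^ (e - 1) * ⟪x, h⟫ * ℓ x := by
  have hderiv : HasFDerivAt (dipoleMode ℓ c e) _ x :=
    ℓ.hasFDerivAt.fun_mul (((hasFDerivAt_rpow_norm_sq e hx).const_mul c).const_add 1)
  rw [hderiv.fderiv]
  simp only [add_apply, smul_apply, coe_innerSL_apply,
    nsmul_eq_mul, Nat.cast_ofNat, smul_eq_mul]
  ring

lemma fderiv_dipoleMode_self (hx : x ≠ 0) :
    fderiv ℝ (dipoleMode ℓ c e) x x = ℓ x * (1 + c * (1 + 2 * e) * (‖x‖ ^ 2) ^ e) := by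
  have hpow : (‖x‖ ^ 2) ^ (e - 1) * ‖x‖ ^ 2 = (‖x‖ ^ 2) ^ e := by
    rw [← rpow_add_one (by positivity)]; ring_nf
  rw [fderiv_dipoleMode_apply ℓ c e hx, real_inner_self_eq_norm_sq]
  linear_combination (2 * c * e * ℓ x) * hpow

lemma fderiv_fderiv_dipoleMode_apply (hx : x ≠ 0) (h : E) :
    fderiv ℝ (fun y => fderiv ℝ (dipoleMode ℓ c e) y h) x h =
      2 * c * e * (‖x‖ ^ 2) ^ (e - 1) * (2 * ⟪x, h⟫ * ℓ h + ‖h‖ ^ 2 * ℓ x) +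
        4 * c * e * (e - 1) * (‖x‖ ^ 2) ^ (e - 2) * ⟪x, h⟫ ^ 2 * ℓ x := by
  have hnear : (fun y => fderiv ℝ (dipoleMode ℓ c e) y h) =ᶠ[nhds x] fun y =>
      ℓ h * (1 + c * (‖y‖ ^ 2) ^ e) + 2 * c * e * (‖y‖ ^ 2) ^ (e - 1) * ⟪h, y⟫ * ℓ y := by
    filter_upwards [isOpen_compl_singleton.mem_nhds hx] with y hy
    rw [fderiv_dipoleMode_apply ℓ c e hy, real_inner_comm]
  have hderiv : HasFDerivAt (fun y =>
      ℓ h * (1 + c * (‖y‖ ^ 2) ^ e) + 2 * c * e * (‖y‖ ^ 2) ^ (e - 1) * ⟪h, y⟫ * ℓ y) _ x :=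
    ((((hasFDerivAt_rpow_norm_sq e hx).const_mul c).const_add 1).const_mul (ℓ h)).fun_add
    ((((hasFDerivAt_rpow_norm_sq (e - 1) hx).const_mul (2 * c * e)).fun_mul
      (innerSL ℝ h).hasFDerivAt).fun_mul ℓ.hasFDerivAt)
  rw [hnear.fderiv_eq, hderiv.fderiv]
  simp only [add_apply, smul_apply, smul_add, coe_innerSL_apply, real_inner_comm h x,
    real_inner_self_eq_norm_sq, nsmul_eq_mul, Nat.cast_ofNat, smul_eq_mul, sub_sub,
    one_add_one_eq_two]
  ring

lemma sum_fderiv_fderiv_dipoleMode {ι : Type*} [Fintype ι] (b : OrthonormalBasis ι ℝ E)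
    (hx : x ≠ 0) :
    ∑ j, fderiv ℝ (fun y => fderiv ℝ (dipoleMode ℓ c e) y (b j)) x (b j) =
      2 * c * e * (2 * e + Fintype.card ι) * (‖x‖ ^ 2) ^ (e - 1) * ℓ x := by
  have hℓ : ∑ j, ⟪x, b j⟫ * ℓ (b j) = ℓ x := by
    conv_rhs => rw [← b.sum_repr' x]
    simp [real_inner_comm]
  have hnorm : ∑ j, ⟪x, b j⟫ ^ 2 = ‖x‖ ^ 2 := by
    rw [← real_inner_self_eq_norm_sq, ← b.sum_inner_mul_inner x x]
    simp [sq, real_inner_comm]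
  have hpow : (‖x‖ ^ 2) ^ (e - 2) * ‖x‖ ^ 2 = (‖x‖ ^ 2) ^ (e - 1) := by
    rw [← rpow_add_one (by positivity)]; ring_nf
  simp only [fderiv_fderiv_dipoleMode_apply ℓ c e hx, b.norm_eq_one, one_pow, one_mul]
  simp only [Finset.sum_add_distrib, Finset.sum_const, Finset.card_univ, nsmul_eq_mul,
    ← Finset.mul_sum, ← Finset.sum_mul, mul_assoc, hℓ, hnorm]
  linear_combination (4 * c * e * (e - 1) * ℓ x) * hpow

variable (n : ℕ)

lemma dipoleMode_neg_half :
    dipoleMode ℓ c (-(n : ℝ) / 2) x = ℓ x * (1 + c / ‖x‖ ^ n) := by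
  rw [dipoleMode, rpow_sq_neg_half (norm_nonneg x), div_eq_mul_inv]

lemma fderiv_dipoleMode_neg_half_self (hx : x ≠ 0) :
    fderiv ℝ (dipoleMode ℓ c (-(n : ℝ) / 2)) x x = ℓ x * (1 - c * (n - 1) / ‖x‖ ^ n) := by
  rw [fderiv_dipoleMode_self ℓ c _ hx, rpow_sq_neg_half (norm_nonneg x)]
  ring

end DipoleMode

section Euclidean

variable {n : ℕ}

lemma IsHarmonicOn.mono {u : EuclideanSpace ℝ (Fin n) → ℝ} {s t : Set (EuclideanSpace ℝ (Fin n))}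
    (hu : IsHarmonicOn u s) (hts : t ⊆ s) : IsHarmonicOn u t :=
  ⟨hu.1.mono hts, fun x hx => hu.2 x (hts hx)⟩

lemma IsHarmonicOn.congr {u v : EuclideanSpace ℝ (Fin n) → ℝ} {s : Set (EuclideanSpace ℝ (Fin n))}
    (hv : IsHarmonicOn v s) (hs : IsOpen s) (huv : Set.EqOn u v s) : IsHarmonicOn u s := by
  refine ⟨hv.1.congr huv, fun x hx => ?_⟩
  have hDuv : fderiv ℝ u =ᶠ[nhds x] fderiv ℝ v :=
    (Filter.eventuallyEq_of_mem (hs.mem_nhds hx) huv).fderiv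
  rw [← hv.2 x hx]
  refine Finset.sum_congr rfl fun j _ => ?_
  have hDuvj : (fun y => fderiv ℝ u y (EuclideanSpace.single j 1)) =ᶠ[nhds x]
      fun y => fderiv ℝ v y (EuclideanSpace.single j 1) := by
    filter_upwards [hDuv] with y hy
    rw [hy]
  rw [hDuvj.fderiv_eq]

lemma isHarmonicOn_dipoleMode (ℓ : EuclideanSpace ℝ (Fin n) →L[ℝ] ℝ) (c : ℝ) :
    IsHarmonicOn (dipoleMode ℓ c (-(n : ℝ) / 2)) {0}ᶜ := by
  refine ⟨fun x hx => (contDiffAt_dipoleMode ℓ c _ hx).contDiffWithinAt, fun x hx => ?_⟩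
  simp_rw [← EuclideanSpace.basisFun_apply (Fin n) ℝ]
  rw [sum_fderiv_fderiv_dipoleMode ℓ c _ _ hx, Fintype.card_fin]
  ring

end Euclidean

theorem stmt8 (n : ℕ) (hn : 2 ≤ n) (R1 R2 : ℝ) (hR1 : 0 < R1) (hR12 : R1 < R2)
    (i : Fin n) :
    letI u : EuclideanSpace ℝ (Fin n) → ℝ := fun x =>
      (‖x‖ + R1 ^ n / (((n : ℝ) - 1) * ‖x‖ ^ (n - 1))) * (x i / ‖x‖)
    letI μ1 : ℝ :=
      ((n : ℝ) - 1) * ((R2 / R1) ^ n - 1) / (R2 * (((n : ℝ) - 1) * (R2 / R1) ^ n + 1))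
    IsHarmonicOn u {x : EuclideanSpace ℝ (Fin n) | R1 < ‖x‖ ∧ ‖x‖ < R2} ∧
    (∀ x : EuclideanSpace ℝ (Fin n), ‖x‖ = R1 → fderiv ℝ u x x = 0) ∧
    (∀ x : EuclideanSpace ℝ (Fin n), ‖x‖ = R2 →
      fderiv ℝ u x (R2⁻¹ • x) = μ1 * u x) := by
  set u : EuclideanSpace ℝ (Fin n) → ℝ := fun x =>
    (‖x‖ + R1 ^ n / (((n : ℝ) - 1) * ‖x‖ ^ (n - 1))) * (x i / ‖x‖)
  have hn1 : 0 < (n : ℝ) - 1 := by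
    have : (2 : ℝ) ≤ n := by exact_mod_cast hn
    linarith
  set v := dipoleMode (EuclideanSpace.proj i) (R1 ^ n / ((n : ℝ) - 1)) (-(n : ℝ) / 2) with hv
  have huv : Set.EqOn u v {0}ᶜ := fun x hx => by
    have hr : ‖x‖ ≠ 0 := norm_ne_zero_iff.2 hx
    simp only [u, hv, dipoleMode_neg_half, PiLp.proj_apply,
      pow_sub₀ _ hr (by omega : 1 ≤ n), pow_one]
    field_simp
  have hDuv : ∀ x : EuclideanSpace ℝ (Fin n), x ≠ 0 → fderiv ℝ u x = fderiv ℝ v x :=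
    fun x hx => (Filter.eventuallyEq_of_mem (isOpen_compl_singleton.mem_nhds hx) huv).fderiv_eq
  refine ⟨((isHarmonicOn_dipoleMode _ _).congr isOpen_compl_singleton huv).mono
    fun x hx => ne_zero_of_norm_ne_zero (hR1.trans hx.1).ne', fun x hx => ?_, fun x hx => ?_⟩
  · have hx0 : x ≠ 0 := ne_zero_of_norm_ne_zero (hx ▸ hR1.ne')
    rw [hDuv x hx0, fderiv_dipoleMode_neg_half_self _ _ _ hx0, hx]
    field_simp
    ring
  · have hR2 := hR1.trans hR12
    have hx0 : x ≠ 0 := ne_zero_of_norm_ne_zero (hx ▸ hR2.ne')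
    have hden : 0 < ((n : ℝ) - 1) * (R2 ^ n / R1 ^ n) + 1 := by positivity
    rw [hDuv x hx0, map_smul, fderiv_dipoleMode_neg_half_self _ _ _ hx0, huv hx0, hv,
      dipoleMode_neg_half, hx]
    simp only [smul_eq_mul, PiLp.proj_apply, div_pow]
    field_simp
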